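/- Let X be a Banach space with a 1-unconditional basis (e_i). Let (y_k) be a block sequence, T: [y_k] → X a bounded linear operator with supp(T y_k) ∩ supp(y_k) = ∅ for all k (diagonal-free). Let x = Σ_{k∈A} a_k y_k be a finite linear combination with A finite, and for B ⊆ A let R_B denote the coordinate projection onto [e_j : j ∈ ∪_{i∈B} supp y_i]. Then R_A T x = (λ/|𝒫|) Σ_{(B,C)∈𝒫} R_B T R_C x, where 𝒫 is the set of balanced ordered partitions of A (|B| = |C| if |A| even, ||B|−|C|| = 1 if |A| odd) and λ = 2L(2L−1)/L² if |A| = 2L, λ = 2(2L+1)/(L+1) if |A| = 2L+1. -/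

import Mathlib

open scoped BigOperators Classical
open Filter Topology

structure SchauderBasis' (X : Type*) [NormedAddCommGroup X] [NormedSpace ℝ X] where
  e : ℕ → X
  coord : ℕ → X →L[ℝ] ℝ
  ortho : ∀ i j, coord i (e j) = if i = j then 1 else 0
  expansion : ∀ x : X, HasSum (fun i => coord i x • e i) x

section Defs

variable {X : Type*} [NormedAddCommGroup X] [NormedSpace ℝ X]

def SchauderBasis'.IsUnconditionalWith (b : SchauderBasis' X) (C : ℝ) : Prop :=
  ∀ x y : X, (∀ i, |b.coord i y| ≤ |b.coord i x|) → ‖y‖ ≤ C * ‖x‖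

def SchauderBasis'.supp (b : SchauderBasis' X) (x : X) : Set ℕ := {i | b.coord i x ≠ 0}

def StrictlySingular {E F : Type*} [NormedAddCommGroup E] [NormedSpace ℝ E]
    [NormedAddCommGroup F] [NormedSpace ℝ F] (T : E →L[ℝ] F) : Prop :=
  ∀ Y : Submodule ℝ E, ¬ FiniteDimensional ℝ Y →
    ¬ ∃ c : ℝ, 0 < c ∧ ∀ y ∈ Y, c * ‖y‖ ≤ ‖T y‖

def SchauderBasis'.TightBySupport (b : SchauderBasis' X) : Prop :=
  ∀ Y Z : Submodule ℝ X, IsClosed (Y : Set X) → IsClosed (Z : Set X) →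
    ¬ FiniteDimensional ℝ Y → ¬ FiniteDimensional ℝ Z →
    (∀ y ∈ Y, ∀ z ∈ Z, ∀ i, b.coord i y ≠ 0 → b.coord i z = 0) →
    IsEmpty (Y ≃L[ℝ] Z)

def SchauderBasis'.IsBlockSequence (b : SchauderBasis' X) (x : ℕ → X) : Prop :=
  (∀ n, x n ≠ 0) ∧ (∀ n, (b.supp (x n)).Finite) ∧
    ∀ m n i j, m < n → b.coord i (x m) ≠ 0 → b.coord j (x n) ≠ 0 → i < j

def closedSpan (x : ℕ → X) : Submodule ℝ X :=
  (Submodule.span ℝ (Set.range x)).topologicalClosure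

def SchauderBasis'.IsDiagonal (b : SchauderBasis' X) (D : X →L[ℝ] X) : Prop :=
  ∀ i, ∃ lam : ℝ, D (b.e i) = lam • b.e i

def IsL1Average (b : SchauderBasis' X) (x : X) (n : ℕ) (c : ℝ) : Prop :=
  0 < n ∧ 1 ≤ c ∧ ∃ xs : Fin n → X,
    (∀ i, ‖xs i‖ ≤ 1) ∧
    (∀ i j : Fin n, i < j → ∀ p q, b.coord p (xs i) ≠ 0 → b.coord q (xs j) ≠ 0 → p < q) ∧
    x = (n : ℝ)⁻¹ • ∑ i, xs i ∧ 1 / c ≤ ‖x‖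

end Defs

/-!
Fix a coordinate `i`. If `i ∈ supp y_m` for some `m ∈ A` (such `m` is unique), then `R_B` keeps
the `i`-th coordinate exactly when `m ∈ B`, so the `i`-th coordinate of `∑_{(B,C) ∈ 𝒫} R_B T R_C x`
is `∑_k N(m,k) (T a_k y_k)_i`, where `N(m,k)` counts the partitions with `m ∈ B`, `k ∈ C`; the
term `k = m` vanishes on both sides because `T` is diagonal-free. Counting by `j = |B|`, with
`n = |A|`, the identity `j (n - j) C(n, j) = n (n - 1) C(n - 2, j - 1)` and the fact that `j (n - j)`
takes the same value (`L²`, resp. `L (L + 1)`) on all balanced sizes give `N(m,k) = |𝒫| / λ`.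
-/

open Finset

theorem Nat.succ_mul_sub_mul_choose (N j : ℕ) :
    (j + 1) * (N + 1 - j) * (N + 2).choose (j + 1) = (N + 2) * (N + 1) * N.choose j := by
  calc (j + 1) * (N + 1 - j) * (N + 2).choose (j + 1)
      = (N + 1 - j) * ((N + 1 + 1).choose (j + 1) * (j + 1)) := by ring
    _ = (N + 2) * ((N + 1).choose j * (N + 1 - j)) := by rw [← Nat.add_one_mul_choose_eq]; ring
    _ = _ := by rw [← Nat.choose_mul_succ_eq]; ring

namespace Finset

theorem card_filter_card_mem {α : Type*} (s : Finset (Finset α)) (S : Finset ℕ) :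
    #{B ∈ s | #B ∈ S} = ∑ j ∈ S, #{B ∈ s | #B = j} := by
  rw [card_eq_sum_card_fiberwise (s := {B ∈ s | #B ∈ S}) (f := card) (t := S)
    fun B hB => (mem_filter.1 hB).2]
  refine sum_congr rfl fun j hj => ?_
  rw [filter_filter]
  exact congrArg card (filter_congr fun B _ => by constructor <;> grind)

variable {α : Type*} [DecidableEq α]

theorem sum_ite_mem_sum_sdiff {M : Type*} [AddCommMonoid M]
    (𝒮 : Finset (Finset α)) (A : Finset α) (m : α) (f : α → M) :
    ∑ B ∈ 𝒮, (if m ∈ B then ∑ k ∈ A \ B, f k else 0) =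
      ∑ k ∈ A, #{B ∈ 𝒮 | m ∈ B ∧ k ∉ B} • f k := by
  calc ∑ B ∈ 𝒮, (if m ∈ B then ∑ k ∈ A \ B, f k else 0)
      = ∑ B ∈ 𝒮, ∑ k ∈ A, if m ∈ B ∧ k ∉ B then f k else 0 := by
        refine sum_congr rfl fun B _ => ?_
        split_ifs with hm <;> simp [hm, sdiff_eq_filter, sum_filter]
    _ = ∑ k ∈ A, ∑ B ∈ 𝒮, if m ∈ B ∧ k ∉ B then f k else 0 := sum_comm
    _ = _ := by simp only [← sum_filter, sum_const]

theorem filter_union_disjoint_eq_image (A : Finset α) (q : Finset α → Prop) [DecidablePred q] :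
    {p ∈ A.powerset ×ˢ A.powerset | p.1 ∪ p.2 = A ∧ Disjoint p.1 p.2 ∧ q p.1} =
      {B ∈ A.powerset | q B}.image fun B => (B, A \ B) := by
  ext ⟨B, C⟩
  simp only [mem_filter, mem_product, mem_powerset, mem_image, Prod.mk.injEq]
  constructor
  · rintro ⟨⟨hB, -⟩, rfl, hd, hq⟩
    exact ⟨B, ⟨hB, hq⟩, rfl, union_sdiff_cancel_left hd⟩
  · rintro ⟨B, ⟨hB, hq⟩, rfl, rfl⟩
    exact ⟨⟨hB, sdiff_subset⟩, union_sdiff_of_subset hB, disjoint_sdiff, hq⟩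

variable {A : Finset α} {m k : α}

theorem card_filter_mem_notMem_card_succ (hm : m ∈ A) (hk : k ∈ A) (hmk : m ≠ k) (j : ℕ) :
    #{B ∈ {B ∈ A.powerset | m ∈ B ∧ k ∉ B} | #B = j + 1} = (#A - 2).choose j := by
  have hcard : #((A.erase m).erase k) = #A - 2 := by
    rw [card_erase_of_mem (mem_erase.2 ⟨hmk.symm, hk⟩), card_erase_of_mem hm]; omega
  rw [← hcard, ← card_powersetCard]
  refine card_nbij' (·.erase m) (insert m) ?_ ?_ ?_ ?_ <;>
  · intro B hB
    simp only [mem_coe, mem_filter, mem_powerset, mem_powersetCard] at hB ⊢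
    grind

theorem mul_card_filter_card_eq_mul_card_mem_notMem (hm : m ∈ A) (hk : k ∈ A) (hmk : m ≠ k)
    (j : ℕ) :
    j * (#A - j) * #{B ∈ A.powerset | #B = j} =
      #A * (#A - 1) * #{B ∈ {B ∈ A.powerset | m ∈ B ∧ k ∉ B} | #B = j} := by
  obtain ⟨N, hN⟩ : ∃ N, #A = N + 2 :=
    ⟨#A - 2, by have := one_lt_card.2 ⟨m, hm, k, hk, hmk⟩; omega⟩
  cases j with
  | zero =>
    suffices {B ∈ {B ∈ A.powerset | m ∈ B ∧ k ∉ B} | #B = 0} = ∅ by rw [this]; simp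
    grind
  | succ j =>
    rw [card_filter_mem_notMem_card_succ hm hk hmk, ← powersetCard_eq_filter, card_powersetCard,
      hN, show N + 2 - (j + 1) = N + 1 - j by omega, Nat.succ_mul_sub_mul_choose]
    rfl

theorem mul_card_filter_card_mem_eq_mul_card_mem_notMem {S : Finset ℕ} {c : ℕ}
    (hS : ∀ j ∈ S, j * (#A - j) = c) (hm : m ∈ A) (hk : k ∈ A) (hmk : m ≠ k) :
    c * #{B ∈ A.powerset | #B ∈ S} =
      #A * (#A - 1) * #{B ∈ {B ∈ A.powerset | #B ∈ S} | m ∈ B ∧ k ∉ B} := by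
  rw [filter_comm, card_filter_card_mem, card_filter_card_mem, mul_sum, mul_sum]
  refine sum_congr rfl fun j hj => ?_
  rw [← hS j hj, mul_card_filter_card_eq_mul_card_mem_notMem hm hk hmk]

end Finset

namespace SchauderBasis'

variable {X : Type*} [NormedAddCommGroup X] [NormedSpace ℝ X] (b : SchauderBasis' X)

theorem ext_coord {u v : X} (h : ∀ i, b.coord i u = b.coord i v) : u = v :=
  (b.expansion u).unique (by simpa only [h] using b.expansion v)

def IsBlockProjection (y : ℕ → X) (R : Finset ℕ → X →L[ℝ] X) : Prop :=
  ∀ B x i, b.coord i (R B x) = if ∃ m ∈ B, b.coord i (y m) ≠ 0 then b.coord i x else 0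

variable {b} {y : ℕ → X} {R : Finset ℕ → X →L[ℝ] X}

theorem IsBlockSequence.eq_of_coord_ne_zero (hy : b.IsBlockSequence y) {i m m' : ℕ}
    (hm : b.coord i (y m) ≠ 0) (hm' : b.coord i (y m') ≠ 0) : m = m' := by
  by_contra hne
  rcases Nat.lt_or_gt_of_ne hne with h | h
  · exact lt_irrefl i (hy.2.2 m m' i i h hm hm')
  · exact lt_irrefl i (hy.2.2 m' m i i h hm' hm)

theorem IsBlockProjection.coord_apply_of_coord_ne_zero (hR : b.IsBlockProjection y R)
    (hy : b.IsBlockSequence y) {i m : ℕ} (him : b.coord i (y m) ≠ 0) (B : Finset ℕ) (x : X) :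
    b.coord i (R B x) = if m ∈ B then b.coord i x else 0 := by
  rw [hR]
  congr 1
  exact propext ⟨fun ⟨m', hm', h⟩ => hy.eq_of_coord_ne_zero h him ▸ hm', fun h => ⟨m, h, him⟩⟩

theorem IsBlockProjection.coord_apply_eq_zero (hR : b.IsBlockProjection y R) {A B : Finset ℕ}
    (hB : B ⊆ A) {i : ℕ} (hi : ∀ m ∈ A, b.coord i (y m) = 0) (x : X) :
    b.coord i (R B x) = 0 := by
  rw [hR, if_neg]
  exact fun ⟨m, hm, h⟩ => h (hi m (hB hm))

theorem IsBlockProjection.card_smul_apply_sum_eq (hR : b.IsBlockProjection y R)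
    (hy : b.IsBlockSequence y) {v : ℕ → X} (hv : ∀ i k, b.coord i (y k) ≠ 0 → b.coord i (v k) = 0)
    {A : Finset ℕ} {𝒮 : Finset (Finset ℕ)} (h𝒮 : ∀ B ∈ 𝒮, B ⊆ A) {lam : ℝ}
    (hcount : ∀ m ∈ A, ∀ k ∈ A, m ≠ k → (#𝒮 : ℝ) = lam * #{B ∈ 𝒮 | m ∈ B ∧ k ∉ B}) :
    (#𝒮 : ℝ) • R A (∑ k ∈ A, v k) = lam • ∑ B ∈ 𝒮, R B (∑ k ∈ A \ B, v k) := by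
  refine b.ext_coord fun i => ?_
  simp only [map_smul, smul_eq_mul, map_sum (b.coord i)]
  by_cases hi : ∃ m ∈ A, b.coord i (y m) ≠ 0
  · obtain ⟨m, hmA, hm⟩ := hi
    simp only [hR.coord_apply_of_coord_ne_zero hy hm, if_pos hmA, map_sum (b.coord i),
      sum_ite_mem_sum_sdiff, nsmul_eq_mul, mul_sum, ← mul_assoc]
    refine sum_congr rfl fun k hk => ?_
    obtain rfl | hmk := eq_or_ne m k
    · rw [hv i m hm, mul_zero, mul_zero]
    · rw [hcount m hmA k hk hmk]
  · push Not at hi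
    rw [hR.coord_apply_eq_zero (subset_refl A) hi, mul_zero,
      sum_eq_zero fun B hB => hR.coord_apply_eq_zero (h𝒮 B hB) hi _, mul_zero]

theorem IsBlockProjection.card_smul_apply_eq_sum_image (hR : b.IsBlockProjection y R)
    (hy : b.IsBlockSequence y) {V : Finset ℕ → X} (hV : ∀ C, V C = ∑ k ∈ C, V {k})
    (hv : ∀ i k, b.coord i (y k) ≠ 0 → b.coord i (V {k}) = 0)
    {A S : Finset ℕ} {c : ℕ} {lam : ℝ} (hS : ∀ j ∈ S, j * (#A - j) = c)
    (hlam : (c : ℝ) * lam = #A * (#A - 1)) :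
    (#({B ∈ A.powerset | #B ∈ S}.image fun B => (B, A \ B)) : ℝ) • R A (V A) =
      lam • ∑ p ∈ {B ∈ A.powerset | #B ∈ S}.image (fun B => (B, A \ B)), R p.1 (V p.2) := by
  have hinj : Function.Injective fun B : Finset ℕ => (B, A \ B) := fun _ _ h => congrArg Prod.fst h
  rw [card_image_of_injective _ hinj, sum_image hinj.injOn, hV]
  simp only [hV (A \ _)]
  refine hR.card_smul_apply_sum_eq hy hv (fun B hB => mem_powerset.1 (mem_filter.1 hB).1) ?_
  intro m hm k hk hmk
  have hA : 2 ≤ #A := one_lt_card.2 ⟨m, hm, k, hk, hmk⟩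
  have h := congrArg (Nat.cast : ℕ → ℝ)
    (mul_card_filter_card_mem_eq_mul_card_mem_notMem hS hm hk hmk)
  push_cast [Nat.cast_sub (by omega : 1 ≤ #A)] at h
  have hc : (c : ℝ) ≠ 0 := by
    rintro hc
    rw [hc, zero_mul] at hlam
    have : (2 : ℝ) ≤ #A := by exact_mod_cast hA
    nlinarith
  refine mul_left_cancel₀ hc ?_
  rw [← mul_assoc, hlam, h]

theorem coord_apply_eq_zero_of_diagonalFree {T : closedSpan y →L[ℝ] X}
    (hdf : ∀ k (u : closedSpan y), (u : X) = y k → ∀ i, b.coord i (y k) ≠ 0 → b.coord i (T u) = 0)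
    {u : closedSpan y} {r : ℝ} {i k : ℕ} (hu : (u : X) = r • y k) (hik : b.coord i (y k) ≠ 0) :
    b.coord i (T u) = 0 := by
  have hyk : y k ∈ closedSpan y :=
    Submodule.le_topologicalClosure _ (Submodule.subset_span ⟨k, rfl⟩)
  rw [show u = r • ⟨y k, hyk⟩ from Subtype.ext hu, map_smul, map_smul, hdf k _ rfl i hik,
    smul_zero]

end SchauderBasis'
theorem stmt11_general {X : Type*} [NormedAddCommGroup X] [NormedSpace ℝ X]
    (b : SchauderBasis' X)
    (y : ℕ → X) (hy : b.IsBlockSequence y)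
    (T : ↥(closedSpan y) →L[ℝ] X)
    -- T is diagonal-free: supp(T y_k) ∩ supp(y_k) = ∅
    (hdf : ∀ k (u : ↥(closedSpan y)), (u : X) = y k →
      ∀ i, b.coord i (y k) ≠ 0 → b.coord i (T u) = 0)
    -- R B is the coordinate projection onto [e_j : j ∈ ∪_{m∈B} supp y_m]
    (R : Finset ℕ → (X →L[ℝ] X))
    (hR : ∀ (B : Finset ℕ) (x : X) (i : ℕ),
      b.coord i (R B x) = if ∃ m ∈ B, b.coord i (y m) ≠ 0 then b.coord i x else 0)
    (A : Finset ℕ) (a : ℕ → ℝ) (L : ℕ)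
    -- w B is the element Σ_{k∈B} a_k y_k of the block subspace [yₙ]
    (w : Finset ℕ → ↥(closedSpan y))
    (hw : ∀ B : Finset ℕ, (w B : X) = ∑ k ∈ B, a k • y k)
    (P : Finset (Finset ℕ × Finset ℕ))
    (hP : P = (A.powerset ×ˢ A.powerset).filter
      (fun p => p.1 ∪ p.2 = A ∧ Disjoint p.1 p.2 ∧
        ((A.card % 2 = 0 ∧ p.1.card = A.card / 2) ∨
         (A.card % 2 = 1 ∧ (p.1.card = A.card / 2 ∨ p.1.card = A.card / 2 + 1))))) :
    (A.card = 2 * L →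
      (P.card : ℝ) • R A (T (w A)) =
        ((2 * (L : ℝ) * (2 * (L : ℝ) - 1)) / (L : ℝ) ^ 2) •
          ∑ p ∈ P, R p.1 (T (w p.2)))
    ∧ (A.card = 2 * L + 1 →
      (P.card : ℝ) • R A (T (w A)) =
        ((2 * (2 * (L : ℝ) + 1)) / ((L : ℝ) + 1)) •
          ∑ p ∈ P, R p.1 (T (w p.2))) := by
  have hv : ∀ i k, b.coord i (y k) ≠ 0 → b.coord i (T (w {k})) = 0 := fun i k =>
    SchauderBasis'.coord_apply_eq_zero_of_diagonalFree hdf (by rw [hw, sum_singleton])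
  have hTw : ∀ C, T (w C) = ∑ k ∈ C, T (w {k}) := fun C => by
    rw [← map_sum]
    congr 1
    rw [Subtype.ext_iff, Submodule.coe_sum, hw]
    exact sum_congr rfl fun k _ => by rw [hw, sum_singleton]
  have key : ∀ (S : Finset ℕ) (c : ℕ) (lam : ℝ), (∀ j ∈ S, j * (#A - j) = c) →
      (c : ℝ) * lam = #A * (#A - 1) → P = {B ∈ A.powerset | #B ∈ S}.image (fun B => (B, A \ B)) →
      (#P : ℝ) • R A (T (w A)) = lam • ∑ p ∈ P, R p.1 (T (w p.2)) := by
    rintro S c lam hS hlam rfl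
    exact SchauderBasis'.IsBlockProjection.card_smul_apply_eq_sum_image hR hy hTw hv hS hlam
  constructor
  · intro hA
    refine key {L} (L * L) _ (fun j hj => ?_) ?_ ?_
    · rw [mem_singleton.1 hj, hA, show 2 * L - L = L by omega]
    · rw [hA]
      push_cast
      rcases eq_or_ne L 0 with rfl | hL
      · simp
      · field_simp
    · rw [hP, ← filter_union_disjoint_eq_image]
      exact filter_congr fun p _ => and_congr_right' <| and_congr_right' <| by
        simp only [mem_singleton]; omega
  · intro hA
    refine key {L, L + 1} (L * (L + 1)) _ ?_ ?_ ?_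
    · intro j hj
      rcases mem_insert.1 hj with rfl | hj
      · rw [hA, show 2 * j + 1 - j = j + 1 by omega]
      · rw [mem_singleton.1 hj, hA, show 2 * L + 1 - (L + 1) = L by omega, mul_comm]
    · rw [hA]
      push_cast
      field_simp
      ring
    · rw [hP, ← filter_union_disjoint_eq_image]
      exact filter_congr fun p _ => and_congr_right' <| and_congr_right' <| by
        simp only [mem_insert, mem_singleton]; omega

/-- for a diagonal-free bounded operator T on a block subspace
and x = Σ_{k∈A} a_k y_k, one has R_A T x = (λ/|𝒫|) Σ_{(B,C)∈𝒫} R_B T R_C x,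
where 𝒫 is the set of balanced ordered partitions of A. -/
theorem stmt11 {X : Type*} [NormedAddCommGroup X] [NormedSpace ℝ X] [CompleteSpace X]
    (b : SchauderBasis' X) (hb : b.IsUnconditionalWith 1)
    (y : ℕ → X) (hy : b.IsBlockSequence y)
    (T : ↥(closedSpan y) →L[ℝ] X)
    -- T is diagonal-free: supp(T y_k) ∩ supp(y_k) = ∅
    (hdf : ∀ k (u : ↥(closedSpan y)), (u : X) = y k →
      ∀ i, b.coord i (y k) ≠ 0 → b.coord i (T u) = 0)
    -- R B is the coordinate projection onto [e_j : j ∈ ∪_{m∈B} supp y_m]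
    (R : Finset ℕ → (X →L[ℝ] X))
    (hR : ∀ (B : Finset ℕ) (x : X) (i : ℕ),
      b.coord i (R B x) = if ∃ m ∈ B, b.coord i (y m) ≠ 0 then b.coord i x else 0)
    (A : Finset ℕ) (a : ℕ → ℝ) (L : ℕ)
    -- w B is the element Σ_{k∈B} a_k y_k of the block subspace [yₙ]
    (w : Finset ℕ → ↥(closedSpan y))
    (hw : ∀ B : Finset ℕ, (w B : X) = ∑ k ∈ B, a k • y k)
    (P : Finset (Finset ℕ × Finset ℕ))
    (hP : P = (A.powerset ×ˢ A.powerset).filter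
      (fun p => p.1 ∪ p.2 = A ∧ Disjoint p.1 p.2 ∧
        ((A.card % 2 = 0 ∧ p.1.card = A.card / 2) ∨
         (A.card % 2 = 1 ∧ (p.1.card = A.card / 2 ∨ p.1.card = A.card / 2 + 1))))) :
    (A.card = 2 * L →
      (P.card : ℝ) • R A (T (w A)) =
        ((2 * (L : ℝ) * (2 * (L : ℝ) - 1)) / (L : ℝ) ^ 2) •
          ∑ p ∈ P, R p.1 (T (w p.2)))
    ∧ (A.card = 2 * L + 1 →
      (P.card : ℝ) • R A (T (w A)) =
        ((2 * (2 * (L : ℝ) + 1)) / ((L : ℝ) + 1)) •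
          ∑ p ∈ P, R p.1 (T (w p.2))) :=
  stmt11_general b y hy T hdf R hR A a L w hw P hP
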